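/- arXiv:2101.10510 — 3 statements merged into one kernel-verified Lean document; each statement's English description precedes it below -/
import Mathlib

section
/- Let γ < 1 with γ ≠ 0, let μ ∈ ℝⁿ, let Σ be an n×n symmetric positive semidefinite real matrix, and let Θ ⊆ ℝⁿ be nonempty. Suppose the Markowitz objective f(θ) = μᵀθ + ((γ−1)/2)·θᵀΣθ is bounded above on Θ with supremum r_ce = sup_{θ∈Θ} f(θ). Then for every a > 0 and w > 0, the supremum over all c > 0 and θ ∈ Θ of the quantity c^γ/γ + a·w^{γ−1}·(μᵀθ·w − c) + (1/2)·a·(γ−1)·w^{γ−2}·(θᵀΣθ)·w² equals w^γ·( ((1−γ)/γ)·a^{γ/(γ−1)} + a·r_ce ). -/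
/-!
The HJB expression separates as `g(c) + a w^γ f(θ)` with `g(c) = c^γ/γ - a w^(γ-1) c` and `f` the
Markowitz objective, so its supremum is `sup g + a w^γ r_ce`. The function `g` is concave; writing
`a w^(γ-1) = k^(γ-1)` with `k = a^(1/(γ-1)) w`, the tangent-line (Bernoulli) bound
`t^γ/γ ≤ 1/γ - 1 + t` at `t = c/k` shows that `g` is maximal at `c = k`, with value `(1/γ - 1) k^γ`.
-/

open Matrix Set

theorem rpow_div_le_inv_sub_one_add {γ t : ℝ} (hγ : γ < 1) (hγ0 : γ ≠ 0) (ht : 0 < t) :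
    t ^ γ / γ ≤ 1 / γ - 1 + t := by
  rcases hγ0.lt_or_gt with hneg | hpos
  · -- Bernoulli at the exponent `1 - γ ≥ 1` and the point `t⁻¹`, multiplied by `t`.
    have bernoulli := one_add_mul_self_le_rpow_one_add (s := t⁻¹ - 1) (p := 1 - γ)
      (by linarith [inv_pos.2 ht]) (by linarith)
    rw [add_sub_cancel, Real.inv_rpow ht.le, ← Real.rpow_neg ht.le, neg_sub] at bernoulli
    have key : 1 - γ + γ * t ≤ t ^ γ := by
      have := mul_le_mul_of_nonneg_left bernoulli ht.le
      rw [← Real.rpow_one_add' ht.le (by linarith), add_sub_cancel] at this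
      field_simp at this
      linarith
    rw [div_le_iff_of_neg hneg]
    field_simp
    linarith
  · have bernoulli := rpow_one_add_le_one_add_mul_self (s := t - 1) (p := γ)
      (by linarith) hpos.le hγ.le
    rw [add_sub_cancel] at bernoulli
    rw [div_le_iff₀ hpos]
    field_simp
    linarith

theorem isGreatest_rpow_div_sub_mul {γ k : ℝ} (hγ : γ < 1) (hγ0 : γ ≠ 0) (hk : 0 < k) :
    IsGreatest ((fun c => c ^ γ / γ - k ^ (γ - 1) * c) '' Ioi 0) ((1 / γ - 1) * k ^ γ) := by
  have hk_mul (c : ℝ) : k ^ (γ - 1) * c = k ^ γ * (c / k) := by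
    rw [Real.rpow_sub_one hk.ne']; ring
  refine ⟨⟨k, hk, ?_⟩, ?_⟩
  · simp only [hk_mul, div_self hk.ne']; ring
  · rintro _ ⟨c, hc, rfl⟩
    have hc_eq : c ^ γ = k ^ γ * (c / k) ^ γ := by
      rw [← Real.mul_rpow hk.le (div_pos hc hk).le, mul_div_cancel₀ c hk.ne']
    have := mul_le_mul_of_nonneg_left
      (rpow_div_le_inv_sub_one_add hγ hγ0 (div_pos hc hk)) (Real.rpow_pos_of_pos hk γ).le
    simp only [hc_eq, hk_mul]
    rw [mul_div_assoc]
    linear_combination this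

theorem isLUB_image2_add {α β : Type*} {s : Set α} {t : Set β} {g : α → ℝ} {h : β → ℝ}
    {a b : ℝ} (hg : IsLUB (g '' s) a) (hh : IsLUB (h '' t) b) :
    IsLUB (image2 (fun x y => g x + h y) s t) (a + b) := by
  simpa only [← image2_add, image2_image_left, image2_image_right] using hg.add hh

theorem rpow_mul_rpow_inv_sub_one {γ a w p : ℝ} (ha : 0 < a) (hw : 0 < w) :
    (a ^ (1 / (γ - 1)) * w) ^ p = a ^ (p / (γ - 1)) * w ^ p := by
  rw [Real.mul_rpow (Real.rpow_pos_of_pos ha _).le hw.le, ← Real.rpow_mul ha.le,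
    one_div_mul_eq_div]

theorem hjb_rhs_eq_add {γ a w c m q : ℝ} (hγ : γ ≠ 1) (ha : 0 < a) (hw : 0 < w) :
    c ^ γ / γ + a * w ^ (γ - 1) * (m * w - c) + 1 / 2 * a * (γ - 1) * w ^ (γ - 2) * q * w ^ 2
      = (c ^ γ / γ - (a ^ (1 / (γ - 1)) * w) ^ (γ - 1) * c)
        + a * w ^ γ * (m + (γ - 1) / 2 * q) := by
  rw [rpow_mul_rpow_inv_sub_one ha hw, div_self (sub_ne_zero.2 hγ), Real.rpow_one,
    Real.rpow_sub_one hw.ne', Real.rpow_sub hw, Real.rpow_two]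
  field_simp
  ring

theorem hjb_rhs_sup_general (n : ℕ) (γ : ℝ) (hγ : γ < 1) (hγ0 : γ ≠ 0)
    (μ : Fin n → ℝ) (S : Matrix (Fin n) (Fin n) ℝ)
    (Θ : Set (Fin n → ℝ)) (hne : Θ.Nonempty)
    (hbdd : BddAbove ((fun θ => μ ⬝ᵥ θ + (γ - 1) / 2 * (θ ⬝ᵥ (S *ᵥ θ))) '' Θ))
    (r_ce : ℝ)
    (hr : r_ce = sSup ((fun θ => μ ⬝ᵥ θ + (γ - 1) / 2 * (θ ⬝ᵥ (S *ᵥ θ))) '' Θ))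
    (a w : ℝ) (ha : 0 < a) (hw : 0 < w) :
    sSup {v : ℝ | ∃ c > (0 : ℝ), ∃ θ ∈ Θ,
        v = c ^ γ / γ + a * w ^ (γ - 1) * ((μ ⬝ᵥ θ) * w - c)
            + 1 / 2 * a * (γ - 1) * w ^ (γ - 2) * (θ ⬝ᵥ (S *ᵥ θ)) * w ^ 2}
      = w ^ γ * ((1 - γ) / γ * a ^ (γ / (γ - 1)) + a * r_ce) := by
  set f := fun θ => μ ⬝ᵥ θ + (γ - 1) / 2 * (θ ⬝ᵥ (S *ᵥ θ))
  -- `k` is the optimal consumption, where `c^(γ-1) = V'(w) = a w^(γ-1)`.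
  set k := a ^ (1 / (γ - 1)) * w
  have hk : 0 < k := mul_pos (Real.rpow_pos_of_pos ha _) hw
  have hF : IsLUB ((fun θ => a * w ^ γ * f θ) '' Θ) (a * w ^ γ * r_ce) := by
    rw [hr, ← image_image (fun x => a * w ^ γ * x)]
    exact (isLUB_csSup (hne.image f) hbdd).mul_left (mul_pos ha (Real.rpow_pos_of_pos hw γ)).le
  have hset : {v : ℝ | ∃ c > (0 : ℝ), ∃ θ ∈ Θ,
        v = c ^ γ / γ + a * w ^ (γ - 1) * ((μ ⬝ᵥ θ) * w - c)
            + 1 / 2 * a * (γ - 1) * w ^ (γ - 2) * (θ ⬝ᵥ (S *ᵥ θ)) * w ^ 2}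
      = image2 (fun c θ => (c ^ γ / γ - k ^ (γ - 1) * c) + a * w ^ γ * f θ) (Ioi 0) Θ := by
    ext v
    simp only [hjb_rhs_eq_add hγ.ne ha hw, mem_ofPred_eq, mem_image2, mem_Ioi, eq_comm (a := v)]
    rfl
  rw [hset, (isLUB_image2_add (isGreatest_rpow_div_sub_mul hγ hγ0 hk).isLUB hF).csSup_eq
    (nonempty_Ioi.image2 hne), rpow_mul_rpow_inv_sub_one ha hw]
  field_simp

/-- With `r_ce = sup_{θ∈Θ} (μᵀθ + ((γ-1)/2)·θᵀΣθ)` finite, for any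
`a > 0`, `w > 0`, the supremum over `c > 0`, `θ ∈ Θ` of the HJB right-hand side
`c^γ/γ + a·w^(γ-1)·(μᵀθ·w - c) + (1/2)·a·(γ-1)·w^(γ-2)·(θᵀΣθ)·w²`
equals `w^γ·(((1-γ)/γ)·a^(γ/(γ-1)) + a·r_ce)`. -/
theorem hjb_rhs_sup (n : ℕ) (γ : ℝ) (hγ : γ < 1) (hγ0 : γ ≠ 0)
    (μ : Fin n → ℝ) (S : Matrix (Fin n) (Fin n) ℝ)
    (hsymm : S.IsSymm) (hpsd : S.PosSemidef)
    (Θ : Set (Fin n → ℝ)) (hne : Θ.Nonempty)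
    (hbdd : BddAbove ((fun θ => μ ⬝ᵥ θ + (γ - 1) / 2 * (θ ⬝ᵥ (S *ᵥ θ))) '' Θ))
    (r_ce : ℝ)
    (hr : r_ce = sSup ((fun θ => μ ⬝ᵥ θ + (γ - 1) / 2 * (θ ⬝ᵥ (S *ᵥ θ))) '' Θ))
    (a w : ℝ) (ha : 0 < a) (hw : 0 < w) :
    sSup {v : ℝ | ∃ c > (0 : ℝ), ∃ θ ∈ Θ,
        v = c ^ γ / γ + a * w ^ (γ - 1) * ((μ ⬝ᵥ θ) * w - c)
            + 1 / 2 * a * (γ - 1) * w ^ (γ - 2) * (θ ⬝ᵥ (S *ᵥ θ)) * w ^ 2}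
      = w ^ γ * ((1 - γ) / γ * a ^ (γ / (γ - 1)) + a * r_ce) :=
  hjb_rhs_sup_general n γ hγ hγ0 μ S Θ hne hbdd r_ce hr a w ha hw
end

section
/- Let γ < 1 with γ ≠ 0, let r ≠ 0 be real, let β > 0, let T ∈ ℝ, and set k = γ·r/(1−γ). Define b(t) = −1/k + (β^{1/(1−γ)} + 1/k)·exp(k·(T − t)), and assume b(t) > 0 for all t ∈ [0, T]. Then the function a(t) = b(t)^{1−γ} is differentiable on [0, T], satisfies the terminal condition a(T) = β, and satisfies the ordinary differential equation −a′(t) = (1−γ)·a(t)^{γ/(γ−1)} + γ·r·a(t) for all t ∈ [0, T]. -/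
/-! The substitution `a = b ^ (1 - γ)` turns the Bernoulli equation
`-a' = (1 - γ) a ^ (γ / (γ - 1)) + γ r a` into the linear equation `b' = -k b - 1`, whose
solution with `b T = β ^ (1 / (1 - γ))` is the given `b`. -/

open Real

theorem hasDerivAt_neg_inv_add_mul_exp {k : ℝ} (hk : k ≠ 0) (C T t : ℝ) :
    HasDerivAt (fun s => -1 / k + C * exp (k * (T - s)))
      (-(k * (-1 / k + C * exp (k * (T - t)))) - 1) t := by
  have hexp := (((hasDerivAt_id' t).const_sub T).const_mul k).exp
  refine ((hexp.const_mul C).const_add (-1 / k)).congr_deriv ?_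
  field_simp
  ring

theorem HasDerivAt.rpow_of_hasDerivAt_neg_mul_sub_one {b : ℝ → ℝ} {k t : ℝ}
    (hb : HasDerivAt b (-(k * b t) - 1) t) (hpos : 0 < b t) (p : ℝ) :
    HasDerivAt (fun s => b s ^ p) (-(p * b t ^ (p - 1)) - p * k * b t ^ p) t := by
  convert hb.rpow_const (p := p) (Or.inl hpos.ne') using 1
  rw [rpow_sub_one hpos.ne']
  field_simp
  ring

/-- With `k = γ·r/(1-γ)` and
`b(t) = -1/k + (β^(1/(1-γ)) + 1/k)·exp(k·(T-t))` positive on `[0, T]`, the function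
`a(t) = b(t)^(1-γ)` is differentiable on `[0, T]`, satisfies `a(T) = β`, and solves
`-a′(t) = (1-γ)·a(t)^(γ/(γ-1)) + γ·r·a(t)` on `[0, T]`. -/
theorem merton_value_coefficient_solves_ode (γ r β T : ℝ)
    (hγ : γ < 1) (hγ0 : γ ≠ 0) (hr : r ≠ 0) (hβ : 0 < β)
    (k : ℝ) (hk : k = γ * r / (1 - γ))
    (b : ℝ → ℝ)
    (hb : ∀ t, b t = -1 / k + (β ^ (1 / (1 - γ)) + 1 / k) * Real.exp (k * (T - t)))
    (hbpos : ∀ t ∈ Set.Icc (0 : ℝ) T, 0 < b t)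
    (a : ℝ → ℝ) (ha : ∀ t, a t = b t ^ (1 - γ)) :
    (∀ t ∈ Set.Icc (0 : ℝ) T, DifferentiableAt ℝ a t) ∧
    a T = β ∧
    ∀ t ∈ Set.Icc (0 : ℝ) T,
      -deriv a t = (1 - γ) * a t ^ (γ / (γ - 1)) + γ * r * a t := by
  have hγ1 : 1 - γ ≠ 0 := by linarith
  have hγ1' : γ - 1 ≠ 0 := by linarith
  have hk0 : k ≠ 0 := hk ▸ div_ne_zero (mul_ne_zero hγ0 hr) hγ1
  have hkγ : (1 - γ) * k = γ * r := by rw [hk]; field_simp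
  have hbderiv (t) : HasDerivAt b (-(k * b t) - 1) t := by
    have := hasDerivAt_neg_inv_add_mul_exp hk0 (β ^ (1 / (1 - γ)) + 1 / k) T t
    rwa [← funext hb, ← hb t] at this
  have haderiv (t) (ht : t ∈ Set.Icc 0 T) :
      HasDerivAt a (-((1 - γ) * b t ^ (-γ)) - (1 - γ) * k * a t) t := by
    have := (hbderiv t).rpow_of_hasDerivAt_neg_mul_sub_one (hbpos t ht) (1 - γ)
    rwa [← funext ha, ← ha t, sub_sub_cancel_left] at this
  refine ⟨fun t ht => (haderiv t ht).differentiableAt, ?_, fun t ht => ?_⟩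
  · rw [ha, hb, sub_self, mul_zero, exp_zero, mul_one, neg_div, add_comm _ (1 / k),
      neg_add_cancel_left, one_div]
    exact rpow_inv_rpow hβ.le hγ1
  · have hpow : a t ^ (γ / (γ - 1)) = b t ^ (-γ) := by
      rw [ha, ← rpow_mul (hbpos t ht).le]
      congr 1
      field_simp
      ring
    rw [(haderiv t ht).deriv, hpow, ← hkγ]
    ring
end

section
/- Let γ < 1, let μ ∈ ℝⁿ, let Σ be an n×n symmetric positive semidefinite real matrix, let Θ ⊆ ℝⁿ be convex, let h > 0, let w_init > 0, and let K be a positive integer. Then the feasible set of the discretized certainty equivalent Merton problem, namely the set of triples (x, w, c) with x ∈ (ℝⁿ)^{K+1}, w ∈ ℝ^{K+1}, c ∈ ℝ^{K} satisfying: w_k > 0 for all k = 0,…,K; the discretized dynamics inequality (w_{k+1} − w_k)/h ≤ μᵀx_k − c_k + ((γ−1)/2)·(x_kᵀΣx_k)/w_k for k = 0,…,K−1; the allocation constraint (1/w_k)·x_k ∈ Θ for k = 0,…,K; and w_0 = w_init, is a convex subset of (ℝⁿ)^{K+1} × ℝ^{K+1} × ℝ^{K}. -/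
/-!
Each constraint is convex in `(x, w, c)` once `w > 0`. The map `(x, w) ↦ xᵀΣx / w` is the
perspective `w · q(x / w)` of the convex quadratic form `q(x) = xᵀΣx`, and the allocation
constraint says that `(x, w)` lies in the perspective cone `{(x, w) | w > 0, x / w ∈ Θ}` of `Θ`;
perspectives preserve convexity. Since `γ < 1`, the dynamics constraint bounds a linear function
of `(x, w, c)` by a concave one.
-/

open Matrix Set

lemma inv_smul_convex_combination {𝕜 E : Type*} [Field 𝕜] [AddCommGroup E] [Module 𝕜 E]
    {x y : E} {w₁ w₂ a b : 𝕜} (hw₁ : w₁ ≠ 0) (hw₂ : w₂ ≠ 0) (hw : a * w₁ + b * w₂ ≠ 0) :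
    (a * w₁ + b * w₂)⁻¹ • (a • x + b • y) =
      (a * w₁ / (a * w₁ + b * w₂)) • (w₁⁻¹ • x) + (b * w₂ / (a * w₁ + b * w₂)) • (w₂⁻¹ • y) := by
  simp only [smul_add, smul_smul]
  congr 2 <;> field_simp

section Convexity

variable {𝕜 E : Type*} [Field 𝕜] [LinearOrder 𝕜] [IsStrictOrderedRing 𝕜]
  [AddCommGroup E] [Module 𝕜 E]

theorem Convex.perspective {s : Set E} (hs : Convex 𝕜 s) :
    Convex 𝕜 {p : E × 𝕜 | 0 < p.2 ∧ p.2⁻¹ • p.1 ∈ s} := by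
  rintro ⟨x, w₁⟩ ⟨hw₁, hx⟩ ⟨y, w₂⟩ ⟨hw₂, hy⟩ a b ha hb hab
  have hw : 0 < a * w₁ + b * w₂ := convex_Ioi (0 : 𝕜) hw₁ hw₂ ha hb hab
  refine ⟨hw, ?_⟩
  simp only [Prod.smul_mk, Prod.mk_add_mk, smul_eq_mul]
  rw [inv_smul_convex_combination hw₁.ne' hw₂.ne' hw.ne']
  exact hs hx hy (by positivity) (by positivity) (by rw [← add_div, div_self hw.ne'])

theorem ConvexOn.perspective {s : Set E} {f : E → 𝕜} (hf : ConvexOn 𝕜 s f) :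
    ConvexOn 𝕜 {p : E × 𝕜 | 0 < p.2 ∧ p.2⁻¹ • p.1 ∈ s} (fun p => p.2 * f (p.2⁻¹ • p.1)) := by
  refine ⟨hf.1.perspective, ?_⟩
  rintro ⟨x, w₁⟩ ⟨hw₁, hx⟩ ⟨y, w₂⟩ ⟨hw₂, hy⟩ a b ha hb hab
  have hw : 0 < a * w₁ + b * w₂ := convex_Ioi (0 : 𝕜) hw₁ hw₂ ha hb hab
  simp only [Prod.smul_mk, Prod.mk_add_mk, smul_eq_mul]
  rw [inv_smul_convex_combination hw₁.ne' hw₂.ne' hw.ne']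
  calc (a * w₁ + b * w₂) * f ((a * w₁ / (a * w₁ + b * w₂)) • (w₁⁻¹ • x) +
          (b * w₂ / (a * w₁ + b * w₂)) • (w₂⁻¹ • y))
      ≤ (a * w₁ + b * w₂) * ((a * w₁ / (a * w₁ + b * w₂)) • f (w₁⁻¹ • x) +
          (b * w₂ / (a * w₁ + b * w₂)) • f (w₂⁻¹ • y)) := by
        gcongr
        exact hf.2 hx hy (by positivity) (by positivity) (by rw [← add_div, div_self hw.ne'])
    _ = a * (w₁ * f (w₁⁻¹ • x)) + b * (w₂ * f (w₂⁻¹ • y)) := by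
        simp only [smul_eq_mul]
        field_simp

theorem LinearMap.BilinForm.convexOn_apply_self (B : LinearMap.BilinForm 𝕜 E)
    (hB : ∀ v, 0 ≤ B v v) : ConvexOn 𝕜 univ (fun v => B v v) := by
  refine ⟨convex_univ, fun x _ y _ a b ha hb hab => ?_⟩
  -- `a q(x) + b q(y) - q(a x + b y) = a b q(x - y)` when `a + b = 1`
  have hxy := mul_nonneg (mul_nonneg ha hb) (hB (x - y))
  simp only [map_add, map_sub, map_smul, LinearMap.add_apply, LinearMap.sub_apply,
    LinearMap.smul_apply, smul_eq_mul] at hxy ⊢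
  rw [← sub_nonneg]
  have hb' : b = 1 - a := by linear_combination hab
  subst hb'
  linear_combination hxy

theorem LinearMap.BilinForm.convexOn_apply_self_div (B : LinearMap.BilinForm 𝕜 E)
    (hB : ∀ v, 0 ≤ B v v) : ConvexOn 𝕜 {p : E × 𝕜 | 0 < p.2} (fun p => B p.1 p.1 / p.2) := by
  have h := (B.convexOn_apply_self hB).perspective
  simp only [mem_univ, and_true] at h
  refine h.congr fun p (hp : 0 < p.2) => ?_
  simp only [map_smul, LinearMap.smul_apply, smul_eq_mul]
  field_simp

end Convexity

theorem Matrix.PosSemidef.convexOn_dotProduct_mulVec_div {n : Type*} [Fintype n] [DecidableEq n]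
    {S : Matrix n n ℝ} (hS : S.PosSemidef) :
    ConvexOn ℝ {p : (n → ℝ) × ℝ | 0 < p.2} (fun p => p.1 ⬝ᵥ S *ᵥ p.1 / p.2) := by
  have h := (Matrix.toBilin' S).convexOn_apply_self_div
    fun v => by simpa [Matrix.toBilin'_apply'] using hS.dotProduct_mulVec_nonneg v
  simpa only [Matrix.toBilin'_apply'] using h

theorem discretized_feasible_set_convex_general (n K : ℕ)
    (γ h w_init : ℝ) (hγ : γ < 1)
    (μ : Fin n → ℝ) (S : Matrix (Fin n) (Fin n) ℝ)
    (hpsd : S.PosSemidef)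
    (Θ : Set (Fin n → ℝ)) (hΘ : Convex ℝ Θ) :
    Convex ℝ
      {p : (Fin (K + 1) → Fin n → ℝ) × (Fin (K + 1) → ℝ) × (Fin K → ℝ) |
        (∀ k, 0 < p.2.1 k) ∧
        (∀ k : Fin K,
          (p.2.1 k.succ - p.2.1 k.castSucc) / h ≤
            μ ⬝ᵥ p.1 k.castSucc - p.2.2 k +
              (γ - 1) / 2 * (p.1 k.castSucc ⬝ᵥ (S *ᵥ p.1 k.castSucc)) /
                p.2.1 k.castSucc) ∧
        (∀ k : Fin (K + 1), (1 / p.2.1 k) • p.1 k ∈ Θ) ∧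
        p.2.1 0 = w_init} := by
  rintro p ⟨hpw, hpd, hpΘ, hp0⟩ q ⟨hqw, hqd, hqΘ, hq0⟩ a b ha hb hab
  refine ⟨fun k => convex_Ioi (0 : ℝ) (hpw k) (hqw k) ha hb hab, fun k => ?_, fun k => ?_, ?_⟩
  · have hquad := hpsd.convexOn_dotProduct_mulVec_div.2
      (x := (p.1 k.castSucc, p.2.1 k.castSucc)) (y := (q.1 k.castSucc, q.2.1 k.castSucc))
      (hpw _) (hqw _) ha hb hab
    simp only [Prod.smul_mk, Prod.mk_add_mk, smul_eq_mul] at hquad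
    simp only [Prod.fst_add, Prod.snd_add, Prod.smul_fst, Prod.smul_snd, Pi.add_apply,
      Pi.smul_apply, smul_eq_mul, dotProduct_add, dotProduct_smul]
    linear_combination a * hpd k + b * hqd k + (1 - γ) / 2 * hquad
  · rw [one_div]
    exact (hΘ.perspective (x := (p.1 k, p.2.1 k)) (y := (q.1 k, q.2.1 k))
      ⟨hpw k, by simpa using hpΘ k⟩ ⟨hqw k, by simpa using hqΘ k⟩ ha hb hab).2
  · simp only [Prod.snd_add, Prod.smul_snd, Prod.fst_add, Prod.smul_fst, Pi.add_apply,
      Pi.smul_apply, smul_eq_mul, hp0, hq0]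
    linear_combination w_init * hab

/-- The feasible set of the discretized certainty equivalent Merton
problem — triples `(x, w, c)` with `w_k > 0`, the discretized dynamics inequality
`(w_{k+1} - w_k)/h ≤ μᵀx_k - c_k + ((γ-1)/2)·(x_kᵀΣx_k)/w_k`, the allocation
constraint `(1/w_k)·x_k ∈ Θ`, and `w_0 = w_init` — is convex. -/
theorem discretized_feasible_set_convex (n K : ℕ) (hK : 0 < K)
    (γ h w_init : ℝ) (hγ : γ < 1) (hh : 0 < h) (hwi : 0 < w_init)
    (μ : Fin n → ℝ) (S : Matrix (Fin n) (Fin n) ℝ)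
    (hsymm : S.IsSymm) (hpsd : S.PosSemidef)
    (Θ : Set (Fin n → ℝ)) (hΘ : Convex ℝ Θ) :
    Convex ℝ
      {p : (Fin (K + 1) → Fin n → ℝ) × (Fin (K + 1) → ℝ) × (Fin K → ℝ) |
        (∀ k, 0 < p.2.1 k) ∧
        (∀ k : Fin K,
          (p.2.1 k.succ - p.2.1 k.castSucc) / h ≤
            μ ⬝ᵥ p.1 k.castSucc - p.2.2 k +
              (γ - 1) / 2 * (p.1 k.castSucc ⬝ᵥ (S *ᵥ p.1 k.castSucc)) /
                p.2.1 k.castSucc) ∧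
        (∀ k : Fin (K + 1), (1 / p.2.1 k) • p.1 k ∈ Θ) ∧
        p.2.1 0 = w_init} :=
  discretized_feasible_set_convex_general n K γ h w_init hγ μ S hpsd Θ hΘ
end
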